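/- arXiv:2407.13917 — 4 statements merged into one kernel-verified Lean document; each statement's English description precedes it below -/
import Mathlib

section
/- For every η ∈ {1,…,k}, the initialization of the multi-set Sinkhorn algorithm satisfies D(Z, Γ⁽⁰⁾, η) ≤ log(1 + 2Δ/α), where Z is any feasible matrix. -/
open Finset

noncomputable section

/-- Row normalization step w.r.t. the η-th set of marginals. -/
def rowNorm {m n k : ℕ} (u : Fin k → Fin n → ℝ) (v : Fin k → Fin m → ℝ) (η : Fin k)
    (G : Matrix (Fin m) (Fin n) ℝ) : Matrix (Fin m) (Fin n) ℝ :=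
  fun i j => G i j * v η i / ∑ j', G i j' * u η j'

/-- Column normalization step w.r.t. the η-th set of marginals (columns with
`u η j = 0` are left untouched). -/
def colNorm {m n k : ℕ} (u : Fin k → Fin n → ℝ) (η : Fin k)
    (G : Matrix (Fin m) (Fin n) ℝ) : Matrix (Fin m) (Fin n) ℝ :=
  fun i j => if 0 < u η j then G i j * u η j / ∑ i', G i' j * u η j else G i j

/-- The marginal-set index η = (t mod k) + 1, as a 0-based index of `Fin k`. -/
def etaIdx (k : ℕ) (hk : 0 < k) (t : ℕ) : Fin k := ⟨t % k, Nat.mod_lt t hk⟩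

/-- The multi-set Sinkhorn iterates Γ⁽ᵗ⁾. -/
def Gamma {m n k : ℕ} (S : Matrix (Fin m) (Fin n) ℝ) (u : Fin k → Fin n → ℝ)
    (v : Fin k → Fin m → ℝ) (hk : 0 < k) : ℕ → Matrix (Fin m) (Fin n) ℝ
  | 0 => fun i j => S i j / ∑ i', S i' j
  | t + 1 => colNorm u (etaIdx k hk t) (rowNorm u v (etaIdx k hk t) (Gamma S u v hk t))

/-- The row-normalized multi-set Sinkhorn iterates Γ'⁽ᵗ⁾. -/
def Gamma' {m n k : ℕ} (S : Matrix (Fin m) (Fin n) ℝ) (u : Fin k → Fin n → ℝ)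
    (v : Fin k → Fin m → ℝ) (hk : 0 < k) (t : ℕ) : Matrix (Fin m) (Fin n) ℝ :=
  rowNorm u v (etaIdx k hk t) (Gamma S u v hk t)

/-- D(Z, Γ, η) = (1/h_η) Σ_{i,j} z_{i,j} u_{η,j} log(z_{i,j}/Γ_{i,j}); the convention
0·log 0 = 0 is automatic since `Real.log 0 = 0` in Mathlib. -/
def Ddiv {m n k : ℕ} (u : Fin k → Fin n → ℝ) (h : Fin k → ℝ)
    (Z G : Matrix (Fin m) (Fin n) ℝ) (η : Fin k) : ℝ :=
  (1 / h η) * ∑ i, ∑ j, Z i j * u η j * Real.log (Z i j / G i j)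

/-- A feasible matrix Z ∈ [0,1]^{m×n}: supported where S is, columns summing to 1, and
realizing all k sets of marginals. -/
def Feasible {m n k : ℕ} (S : Matrix (Fin m) (Fin n) ℝ) (u : Fin k → Fin n → ℝ)
    (v : Fin k → Fin m → ℝ) (Z : Matrix (Fin m) (Fin n) ℝ) : Prop :=
  (∀ i j, Z i j ∈ Set.Icc (0 : ℝ) 1) ∧ (∀ i j, S i j = 0 → Z i j = 0) ∧
    (∀ j, ∑ i, Z i j = 1) ∧ (∀ η i, ∑ j, Z i j * u η j = v η i)

/-- α = (smallest positive entry of S) / (largest entry of S). -/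
def alphaS {m n : ℕ} (S : Matrix (Fin m) (Fin n) ℝ) : ℝ :=
  sInf {x : ℝ | 0 < x ∧ ∃ i j, S i j = x} / sSup {x : ℝ | ∃ i j, S i j = x}

/-- Δ = the maximum number of positive entries in any column of S. -/
def DeltaS {m n : ℕ} (S : Matrix (Fin m) (Fin n) ℝ) : ℕ :=
  Finset.univ.sup fun j => Nat.card {i : Fin m // 0 < S i j}

/-- KL divergence between the target row marginals v_η and the row marginals achieved
by Γ⁽ᵗ⁾, where η = (t mod k) + 1. -/
def KLv {m n k : ℕ} (S : Matrix (Fin m) (Fin n) ℝ) (u : Fin k → Fin n → ℝ)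
    (v : Fin k → Fin m → ℝ) (h : Fin k → ℝ) (hk : 0 < k) (t : ℕ) : ℝ :=
  ∑ i, (v (etaIdx k hk t) i / h (etaIdx k hk t)) *
    Real.log (v (etaIdx k hk t) i / ∑ j, Gamma S u v hk t i j * u (etaIdx k hk t) j)

/-- KL divergence between the target column marginals u_η and the column marginals
achieved by Γ'⁽ᵗ⁾, where η = (t mod k) + 1; terms with `u η j = 0` vanish since
`Real.log 0 = 0`. -/
def KLu {m n k : ℕ} (S : Matrix (Fin m) (Fin n) ℝ) (u : Fin k → Fin n → ℝ)
    (v : Fin k → Fin m → ℝ) (h : Fin k → ℝ) (hk : 0 < k) (t : ℕ) : ℝ :=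
  ∑ j, (u (etaIdx k hk t) j / h (etaIdx k hk t)) *
    Real.log (u (etaIdx k hk t) j / ∑ i, Gamma' S u v hk t i j * u (etaIdx k hk t) j)

/-- Lemma 3.3: for every η, D(Z, Γ⁽⁰⁾, η) ≤ log(1 + 2Δ/α). -/
theorem stmt0
    {m n k : ℕ} (hk : 0 < k)
    (S : Matrix (Fin m) (Fin n) ℝ)
    (hS : ∀ i j, 0 ≤ S i j) (hScol : ∀ j, ∃ i, 0 < S i j)
    (u : Fin k → Fin n → ℝ) (v : Fin k → Fin m → ℝ)
    (hu : ∀ η j, 0 ≤ u η j) (hv : ∀ η i, 0 < v η i)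
    (h : Fin k → ℝ) (hh : ∀ η, 0 < h η)
    (hvh : ∀ η, ∑ i, v η i = h η) (huh : ∀ η, ∑ j, u η j = h η)
    (Z : Matrix (Fin m) (Fin n) ℝ) (hZ : Feasible S u v Z) :
    ∀ η : Fin k, Ddiv u h Z (Gamma S u v hk 0) η ≤
      Real.log (1 + 2 * (DeltaS S : ℝ) / alphaS S) := by
  intro η
  classical
  by_cases hn : n = 0
  · subst hn
    have hA : {x : ℝ | ∃ i j, S i j = x} = ∅ := by
      ext x; simp
    have hB : {x : ℝ | 0 < x ∧ ∃ i j, S i j = x} = ∅ := by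
      ext x; simp
    have hα : alphaS S = 0 := by
      rw [alphaS, hA, hB]; simp
    have hD : Ddiv u h Z (Gamma S u v hk 0) η = 0 := by simp [Ddiv]
    rw [hD, hα]; simp
  · obtain ⟨j₀⟩ : Nonempty (Fin n) := ⟨⟨0, Nat.pos_of_ne_zero hn⟩⟩
    obtain ⟨i₀, hi₀⟩ := hScol j₀
    set A := {x : ℝ | ∃ i j, S i j = x} with hAdef
    set B := {x : ℝ | 0 < x ∧ ∃ i j, S i j = x} with hBdef
    have hAfin : A.Finite := by
      have : A = Set.range (fun p : Fin m × Fin n => S p.1 p.2) := by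
        ext x; simp [hAdef, eq_comm, Prod.exists]
      rw [this]; exact Set.finite_range _
    have hBfin : B.Finite := hAfin.subset (fun x hx => hx.2)
    set smax := sSup A with hsmaxdef
    set smin := sInf B with hsmindef
    have hAne : A.Nonempty := ⟨S i₀ j₀, i₀, j₀, rfl⟩
    have hBne : B.Nonempty := ⟨S i₀ j₀, hi₀, i₀, j₀, rfl⟩
    have hsmax_mem : smax ∈ A := hAne.csSup_mem hAfin
    have hsmin_mem : smin ∈ B := hBne.csInf_mem hBfin
    have hsmin_pos : 0 < smin := hsmin_mem.1
    have hle_smax : ∀ i j, S i j ≤ smax := fun i j => le_csSup hAfin.bddAbove ⟨i, j, rfl⟩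
    have hsmin_le : ∀ i j, 0 < S i j → smin ≤ S i j :=
      fun i j h' => csInf_le hBfin.bddBelow ⟨h', i, j, rfl⟩
    have hsmax_pos : 0 < smax := lt_of_lt_of_le hi₀ (hle_smax i₀ j₀)
    have hminmax : smin ≤ smax := by
      obtain ⟨-, i, j, hij⟩ := hsmin_mem
      rw [← hij]; exact hle_smax i j
    set Δ := DeltaS S with hΔdef
    have hcard : ∀ j : Fin n, Nat.card {i : Fin m // 0 < S i j} ≤ Δ := by
      intro j
      rw [hΔdef, DeltaS]
      exact Finset.le_sup (f := fun j : Fin n => Nat.card {i : Fin m // 0 < S i j}) (Finset.mem_univ j)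
    have hΔpos : 0 < Δ := by
      haveI hne : Nonempty {i // 0 < S i j₀} := ⟨⟨i₀, hi₀⟩⟩
      exact lt_of_lt_of_le Nat.card_pos (hcard j₀)
    have hΔR : (1 : ℝ) ≤ (Δ : ℝ) := by exact_mod_cast hΔpos
    have hcolsum_pos : ∀ j, 0 < ∑ i, S i j := by
      intro j
      obtain ⟨i, hi⟩ := hScol j
      exact Finset.sum_pos' (fun i _ => hS i j) ⟨i, Finset.mem_univ i, hi⟩
    have hcolsum_le : ∀ j, ∑ i, S i j ≤ (Δ : ℝ) * smax := by
      intro j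
      have h1 : ∑ i, S i j = ∑ i ∈ Finset.univ.filter (fun i => 0 < S i j), S i j := by
        refine (Finset.sum_subset (Finset.filter_subset _ _) ?_).symm
        intro i _ hi
        simp only [Finset.mem_filter, Finset.mem_univ, true_and] at hi
        exact le_antisymm (not_lt.mp hi) (hS i j)
      have h2 : ∑ i ∈ Finset.univ.filter (fun i => 0 < S i j), S i j ≤
          ((Finset.univ.filter (fun i => 0 < S i j)).card : ℝ) * smax := by
        have := Finset.sum_le_card_nsmul (Finset.univ.filter (fun i => 0 < S i j))
          (fun i => S i j) smax (fun i _ => hle_smax i j)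
        simpa [nsmul_eq_mul] using this
      have h3 : ((Finset.univ.filter (fun i => 0 < S i j)).card : ℝ) ≤ (Δ : ℝ) := by
        have : (Finset.univ.filter (fun i => 0 < S i j)).card = Nat.card {i : Fin m // 0 < S i j} := by
          rw [Nat.card_eq_fintype_card, Fintype.card_subtype]
        rw [this]; exact_mod_cast hcard j
      calc ∑ i, S i j = _ := h1
        _ ≤ ((Finset.univ.filter (fun i => 0 < S i j)).card : ℝ) * smax := h2
        _ ≤ (Δ : ℝ) * smax := mul_le_mul_of_nonneg_right h3 hsmax_pos.le
    set q : ℝ := smin / ((Δ : ℝ) * smax) with hqdef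
    have hΔsmax_pos : 0 < (Δ : ℝ) * smax := mul_pos (by exact_mod_cast hΔpos) hsmax_pos
    have hqpos : 0 < q := div_pos hsmin_pos hΔsmax_pos
    set r : ℝ := (Δ : ℝ) * smax / smin with hrdef
    have hrpos : 0 < r := div_pos hΔsmax_pos hsmin_pos
    have hr1 : (1 : ℝ) ≤ r := by
      rw [hrdef, le_div_iff₀ hsmin_pos, one_mul]
      calc smin ≤ smax := hminmax
        _ = 1 * smax := (one_mul _).symm
        _ ≤ (Δ : ℝ) * smax := mul_le_mul_of_nonneg_right hΔR hsmax_pos.le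
    have hqr : 1 / q = r := by
      rw [hqdef, hrdef, one_div_div]
    set L : ℝ := Real.log r with hLdef
    have hG0 : ∀ i j, Gamma S u v hk 0 i j = S i j / ∑ i', S i' j := by
      intro i j; rfl
    have hterm : ∀ i j, Z i j * u η j * Real.log (Z i j / Gamma S u v hk 0 i j)
        ≤ Z i j * u η j * L := by
      intro i j
      rcases eq_or_lt_of_le (hZ.1 i j).1 with hz | hz
      · rw [← hz]; simp
      · have hSij : 0 < S i j := by
          rcases (hS i j).eq_or_lt with h' | h'
          · exact absurd (hZ.2.1 i j h'.symm) (ne_of_gt hz)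
          · exact h'
        have hGpos : 0 < Gamma S u v hk 0 i j := by
          rw [hG0]; exact div_pos hSij (hcolsum_pos j)
        have hGq : q ≤ Gamma S u v hk 0 i j := by
          rw [hG0, hqdef]
          exact div_le_div₀ (hS i j) (hsmin_le i j hSij) (hcolsum_pos j) (hcolsum_le j)
        have hZG : Z i j / Gamma S u v hk 0 i j ≤ r := by
          rw [← hqr]
          exact div_le_div₀ zero_le_one (hZ.1 i j).2 hqpos hGq
        have hlog : Real.log (Z i j / Gamma S u v hk 0 i j) ≤ L := by
          rw [hLdef]
          exact Real.log_le_log (div_pos hz hGpos) hZG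
        exact mul_le_mul_of_nonneg_left hlog
          (mul_nonneg (hZ.1 i j).1 (hu η j))
    have hsum : ∑ i, ∑ j, Z i j * u η j * Real.log (Z i j / Gamma S u v hk 0 i j)
        ≤ L * h η := by
      calc ∑ i, ∑ j, Z i j * u η j * Real.log (Z i j / Gamma S u v hk 0 i j)
          ≤ ∑ i, ∑ j, Z i j * u η j * L :=
            Finset.sum_le_sum (fun i _ => Finset.sum_le_sum (fun j _ => hterm i j))
        _ = (∑ i : Fin m, ∑ j, Z i j * u η j) * L := by
            rw [Finset.sum_mul]
            exact Finset.sum_congr rfl (fun i _ => (Finset.sum_mul _ _ _).symm)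
        _ = (∑ i, v η i) * L := by
            congr 1
            exact Finset.sum_congr rfl (fun i _ => hZ.2.2.2 η i)
        _ = L * h η := by rw [hvh η, mul_comm]
    have hD : Ddiv u h Z (Gamma S u v hk 0) η ≤ L := by
      rw [Ddiv]
      have h1 : (1 / h η) * (∑ i, ∑ j, Z i j * u η j *
          Real.log (Z i j / Gamma S u v hk 0 i j)) ≤ (1 / h η) * (L * h η) :=
        mul_le_mul_of_nonneg_left hsum (one_div_pos.mpr (hh η)).le
      calc (1 / h η) * ∑ i, ∑ j, Z i j * u η j *
            Real.log (Z i j / Gamma S u v hk 0 i j) ≤ (1 / h η) * (L * h η) := h1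
        _ = L := by rw [one_div, inv_mul_eq_div, mul_div_assoc, div_self (ne_of_gt (hh η)), mul_one]
    refine hD.trans ?_
    have halpha : alphaS S = smin / smax := rfl
    have h2r : 2 * (Δ : ℝ) / alphaS S = 2 * r := by
      rw [halpha, hrdef]
      field_simp
    rw [h2r, hLdef]
    apply Real.log_le_log hrpos
    linarith
end
end

section
/- For every t ≥ 0, with η = (t mod k)+1, the row-normalization step of the multi-set Sinkhorn algorithm satisfies D(Z, Γ⁽ᵗ⁾, η) − D(Z, Γ'⁽ᵗ⁾, η) = D_KL(π_{v_η} ‖ π_{v⁽ᵗ⁾_η}), where Z is any feasible matrix. -/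
/-!
Row normalization multiplies row `i` of `Γ⁽ᵗ⁾` by `cᵢ = v_{η,i} / v⁽ᵗ⁾_{η,i}`, so wherever
`z_{i,j} ≠ 0` the log-ratio `log (z_{i,j} / Γ_{i,j})` drops by exactly `log cᵢ`. Weighting by
`z_{i,j} u_{η,j}` and using the row marginals `∑_j z_{i,j} u_{η,j} = v_{η,i}` of `Z` turns the
difference into `∑_i (v_{η,i} / h_η) log cᵢ`. For the logarithms to split, `Γ⁽ᵗ⁾` must be
positive on the support of `S` and have positive row marginals; both persist along the iteration
because the feasible `Z` puts weight somewhere in every row.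
-/

open Finset

noncomputable section

structure PosOnSupport {m n : ℕ} (S G : Matrix (Fin m) (Fin n) ℝ) : Prop where
  nonneg : ∀ i j, 0 ≤ G i j
  pos : ∀ i j, S i j ≠ 0 → 0 < G i j

namespace PosOnSupport

variable {m n k : ℕ} {S G : Matrix (Fin m) (Fin n) ℝ} {u : Fin k → Fin n → ℝ}
  {v : Fin k → Fin m → ℝ} {η : Fin k}

theorem rowSum_pos (hG : PosOnSupport S G) {Z : Matrix (Fin m) (Fin n) ℝ}
    (hZ : Feasible S u v Z) (hu : ∀ j, 0 ≤ u η j) {i : Fin m} (hv : 0 < v η i) :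
    0 < ∑ j, G i j * u η j := by
  obtain ⟨-, hsupp, -, hmarg⟩ := hZ
  obtain ⟨j, -, hj⟩ : ∃ j ∈ univ, Z i j * u η j ≠ 0 :=
    exists_ne_zero_of_sum_ne_zero (by rw [hmarg η i]; exact hv.ne')
  have hS : S i j ≠ 0 := fun h0 => left_ne_zero_of_mul hj (hsupp i j h0)
  have hupos : 0 < u η j := (hu j).lt_of_ne' (right_ne_zero_of_mul hj)
  exact sum_pos' (fun j _ => mul_nonneg (hG.nonneg i j) (hu j))
    ⟨j, mem_univ j, mul_pos (hG.pos i j hS) hupos⟩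

theorem rowNorm (hG : PosOnSupport S G) (hv : ∀ i, 0 < v η i)
    (hrow : ∀ i, 0 < ∑ j, G i j * u η j) : PosOnSupport S (rowNorm u v η G) where
  nonneg i j := div_nonneg (mul_nonneg (hG.nonneg i j) (hv i).le) (hrow i).le
  pos i j hij := div_pos (mul_pos (hG.pos i j hij) (hv i)) (hrow i)

theorem colNorm (hG : PosOnSupport S G) : PosOnSupport S (colNorm u η G) where
  nonneg i j := by
    unfold _root_.colNorm
    split_ifs with hu
    · exact div_nonneg (mul_nonneg (hG.nonneg i j) hu.le)
        (sum_nonneg fun i' _ => mul_nonneg (hG.nonneg i' j) hu.le)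
    · exact hG.nonneg i j
  pos i j hij := by
    unfold _root_.colNorm
    split_ifs with hu
    · exact div_pos (mul_pos (hG.pos i j hij) hu)
        (sum_pos' (fun i' _ => mul_nonneg (hG.nonneg i' j) hu.le)
          ⟨i, mem_univ i, mul_pos (hG.pos i j hij) hu⟩)
    · exact hG.pos i j hij

end PosOnSupport

theorem posOnSupport_gamma {m n k : ℕ} (hk : 0 < k) {S : Matrix (Fin m) (Fin n) ℝ}
    (hS : ∀ i j, 0 ≤ S i j) {u : Fin k → Fin n → ℝ} {v : Fin k → Fin m → ℝ}
    (hu : ∀ η j, 0 ≤ u η j) (hv : ∀ η i, 0 < v η i) {Z : Matrix (Fin m) (Fin n) ℝ}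
    (hZ : Feasible S u v Z) : ∀ t, PosOnSupport S (Gamma S u v hk t)
  | 0 =>
    { nonneg := fun i j => div_nonneg (hS i j) (sum_nonneg fun i' _ => hS i' j)
      pos := fun i j hij =>
        have hpos : 0 < S i j := (hS i j).lt_of_ne' hij
        div_pos hpos (sum_pos' (fun i' _ => hS i' j) ⟨i, mem_univ i, hpos⟩) }
  | t + 1 =>
    have hG := posOnSupport_gamma hk hS hu hv hZ t
    (hG.rowNorm (hv _) fun i => hG.rowSum_pos hZ (hu _) (hv _ i)).colNorm

theorem Ddiv_sub_Ddiv_mul_row {m n k : ℕ} (u : Fin k → Fin n → ℝ) (h : Fin k → ℝ)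
    (Z G : Matrix (Fin m) (Fin n) ℝ) (c : Fin m → ℝ) (η : Fin k)
    (hG : ∀ i j, Z i j ≠ 0 → G i j ≠ 0) (hc : ∀ i, c i ≠ 0) :
    Ddiv u h Z G η - Ddiv u h Z (fun i j => G i j * c i) η =
      1 / h η * ∑ i, (∑ j, Z i j * u η j) * Real.log (c i) := by
  unfold Ddiv
  rw [← mul_sub, ← sum_sub_distrib]
  congr 1
  refine sum_congr rfl fun i _ => ?_
  rw [← sum_sub_distrib, sum_mul]
  refine sum_congr rfl fun j _ => ?_
  by_cases hZ : Z i j = 0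
  · simp [hZ]
  · rw [← div_div, Real.log_div (div_ne_zero hZ (hG i j hZ)) (hc i)]
    ring

theorem stmt1_general
    {m n k : ℕ} (hk : 0 < k)
    (S : Matrix (Fin m) (Fin n) ℝ)
    (hS : ∀ i j, 0 ≤ S i j)
    (u : Fin k → Fin n → ℝ) (v : Fin k → Fin m → ℝ)
    (hu : ∀ η j, 0 ≤ u η j) (hv : ∀ η i, 0 < v η i)
    (h : Fin k → ℝ)
    (Z : Matrix (Fin m) (Fin n) ℝ) (hZ : Feasible S u v Z)
    (t : ℕ) :
    Ddiv u h Z (Gamma S u v hk t) (etaIdx k hk t) -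
        Ddiv u h Z (Gamma' S u v hk t) (etaIdx k hk t) =
      KLv S u v h hk t := by
  set η := etaIdx k hk t
  set G := Gamma S u v hk t
  have hG : PosOnSupport S G := posOnSupport_gamma hk hS hu hv hZ t
  have hrow : ∀ i, 0 < ∑ j, G i j * u η j := fun i => hG.rowSum_pos hZ (hu η) (hv η i)
  have hZG : ∀ i j, Z i j ≠ 0 → G i j ≠ 0 := fun i j hZij =>
    (hG.pos i j fun hSij => hZij (hZ.2.1 i j hSij)).ne'
  have hGamma' : Gamma' S u v hk t =
      fun i j => G i j * (v η i / ∑ j', G i j' * u η j') := by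
    funext i j
    exact mul_div_assoc _ _ _
  rw [hGamma', Ddiv_sub_Ddiv_mul_row u h Z G _ η hZG
    fun i => div_ne_zero (hv η i).ne' (hrow i).ne', KLv, mul_sum]
  refine sum_congr rfl fun i _ => ?_
  rw [hZ.2.2.2 η i]
  ring

/-- Lemma 3.4, first identity: D(Z, Γ⁽ᵗ⁾, η) − D(Z, Γ'⁽ᵗ⁾, η) = D_KL(π_{v_η} ‖ π_{v⁽ᵗ⁾_η}). -/
theorem stmt1
    {m n k : ℕ} (hk : 0 < k)
    (S : Matrix (Fin m) (Fin n) ℝ)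
    (hS : ∀ i j, 0 ≤ S i j) (hScol : ∀ j, ∃ i, 0 < S i j)
    (u : Fin k → Fin n → ℝ) (v : Fin k → Fin m → ℝ)
    (hu : ∀ η j, 0 ≤ u η j) (hv : ∀ η i, 0 < v η i)
    (h : Fin k → ℝ) (hh : ∀ η, 0 < h η)
    (hvh : ∀ η, ∑ i, v η i = h η) (huh : ∀ η, ∑ j, u η j = h η)
    (Z : Matrix (Fin m) (Fin n) ℝ) (hZ : Feasible S u v Z)
    (t : ℕ) :
    Ddiv u h Z (Gamma S u v hk t) (etaIdx k hk t) -
        Ddiv u h Z (Gamma' S u v hk t) (etaIdx k hk t) =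
      KLv S u v h hk t :=
  stmt1_general hk S hS u v hu hv h Z hZ t
end
end

section
/- Packing constraints are equivalent to Sinkhorn marginal constraints: let l ≥ 1, a ∈ ℝ_{≥0}^l and b > 0, and define u_p = (a_1, …, a_l, b) ∈ ℝ_{≥0}^{l+1} and v_p = (b, Σ_{i=1}^l a_i). Then a vector x ∈ [0,1]^l satisfies Σ_{i=1}^l a_i x_i ≤ b if and only if there exists a matrix Γ ∈ [0,1]^{2×(l+1)} with Γ_{1,i} = x_i for i = 1,…,l, Σ_{r=1}^2 Γ_{r,j} = 1 for every column j, Σ_{j=1}^{l+1} Γ_{1,j} u_{p,j} = b, and Σ_{j=1}^{l+1} Γ_{2,j} u_{p,j} = Σ_{i=1}^l a_i. -/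
open Finset

noncomputable section

/-- LinSAT encoding of a packing constraint: x ∈ [0,1]^l satisfies Σ a_i x_i ≤ b iff the
Sinkhorn marginal constraints with column marginals u_p = (a_1, …, a_l, b) and row
marginals v_p = (b, Σ a_i) are satisfiable by some Γ ∈ [0,1]^{2×(l+1)} whose first row
restricted to the first l columns is x. -/
theorem stmt11
    {l : ℕ} (hl : 0 < l)
    (a : Fin l → ℝ) (ha : ∀ i, 0 ≤ a i) (b : ℝ) (hb : 0 < b)
    (x : Fin l → ℝ) (hx : ∀ i, x i ∈ Set.Icc (0 : ℝ) 1) :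
    (∑ i, a i * x i ≤ b) ↔
      ∃ Γ : Matrix (Fin 2) (Fin (l + 1)) ℝ,
        (∀ r j, Γ r j ∈ Set.Icc (0 : ℝ) 1) ∧
        (∀ i : Fin l, Γ 0 i.castSucc = x i) ∧
        (∀ j, ∑ r, Γ r j = 1) ∧
        (∑ j, Γ 0 j * (Fin.snoc a b : Fin (l + 1) → ℝ) j = b) ∧
        (∑ j, Γ 1 j * (Fin.snoc a b : Fin (l + 1) → ℝ) j = ∑ i, a i) := by
  constructor
  · intro h
    have hsum0 : 0 ≤ ∑ i, a i * x i :=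
      Finset.sum_nonneg fun i _ => mul_nonneg (ha i) (hx i).1
    set t : ℝ := (b - ∑ i, a i * x i) / b with ht
    have ht0 : 0 ≤ t := div_nonneg (by linarith) hb.le
    have ht1 : t ≤ 1 := by
      rw [ht, div_le_one hb]; linarith
    refine ⟨fun r => Fin.snoc (fun i => if r = 0 then x i else 1 - x i)
      (if r = 0 then t else 1 - t), ?_, ?_, ?_, ?_, ?_⟩
    · intro r j
      refine Fin.lastCases ?_ (fun i => ?_) j
      · simp only [Fin.snoc_last]
        split <;> constructor <;> linarith
      · simp only [Fin.snoc_castSucc]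
        split
        · exact hx i
        · constructor <;> [linarith [(hx i).2]; linarith [(hx i).1]]
    · intro i; simp
    · intro j
      rw [Fin.sum_univ_two]
      refine Fin.lastCases ?_ (fun i => ?_) j <;> simp
    · rw [Fin.sum_univ_castSucc]
      simp only [Fin.snoc_castSucc, Fin.snoc_last, if_pos rfl, ite_true]
      have : t * b = b - ∑ i, a i * x i := by
        rw [ht, div_mul_cancel₀]; exact hb.ne'
      rw [Finset.sum_congr rfl (fun i _ => by ring_nf : ∀ i ∈ univ, x i * a i = a i * x i)]
      linarith
    · rw [Fin.sum_univ_castSucc]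
      have h1 : (1 : Fin 2) ≠ 0 := by decide
      simp only [Fin.snoc_castSucc, Fin.snoc_last, if_neg h1, ite_true, ite_false]
      have : (1 - t) * b = ∑ i, a i * x i := by
        rw [ht]; field_simp; ring
      have h2 : ∀ i ∈ univ, (1 - x i) * a i = a i - a i * x i := fun i _ => by ring
      rw [Finset.sum_congr rfl h2, Finset.sum_sub_distrib]
      linarith
  · rintro ⟨Γ, hΓ01, hΓx, -, hrow, -⟩
    have := hrow
    rw [Fin.sum_univ_castSucc] at this
    simp only [Fin.snoc_castSucc, Fin.snoc_last] at this
    have hle : ∑ i, a i * x i ≤ ∑ i, Γ 0 i.castSucc * a i := by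
      apply le_of_eq
      exact Finset.sum_congr rfl fun i _ => by rw [hΓx i]; ring
    have hpos : 0 ≤ Γ 0 (Fin.last l) * b := mul_nonneg (hΓ01 0 _).1 hb.le
    linarith
end
end

section
/- Covering constraints are equivalent to Sinkhorn marginal constraints: let l ≥ 1, c ∈ ℝ_{≥0}^l and d > 0 with Σ_{i=1}^l c_i ≥ d, let γ = ⌊Σ_{i=1}^l c_i / d⌋, and define u_c = (c_1, …, c_l, γd) ∈ ℝ_{≥0}^{l+1} and v_c = ((γ+1)d, Σ_{i=1}^l c_i − d). Then a vector x ∈ [0,1]^l satisfies Σ_{i=1}^l c_i x_i ≥ d if and only if there exists a matrix Γ ∈ [0,1]^{2×(l+1)} with Γ_{1,i} = x_i for i = 1,…,l, Σ_{r=1}^2 Γ_{r,j} = 1 for every column j, Σ_{j=1}^{l+1} Γ_{1,j} u_{c,j} = (γ+1)d, and Σ_{j=1}^{l+1} Γ_{2,j} u_{c,j} = Σ_{i=1}^l c_i − d. -/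
/-!
Write `S = ∑ cᵢ`, `γ = ⌊S / d⌋` and `D = γ d`, so that `0 < D ≤ S < D + d`. A matrix meeting the
marginals is determined by its first row `(x, t)`, and the first-row marginal reads
`∑ cᵢ xᵢ + t D = D + d`; the second-row marginal is then automatic, being the complement of the
first one in `∑ u_c = S + D`. Since `∑ cᵢ xᵢ ≤ S < D + d`, the slack
`t = (D + d - ∑ cᵢ xᵢ) / D` is nonnegative, and it is at most `1` exactly when `d ≤ ∑ cᵢ xᵢ`.
-/

open Finset

lemma one_le_floor_div {S d : ℝ} (hd : 0 < d) (hdS : d ≤ S) : (1 : ℝ) ≤ ⌊S / d⌋ := by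
  exact_mod_cast Int.le_floor.mpr (by simpa using (one_le_div hd).mpr hdS)

lemma lt_floor_div_add_one_mul {S d : ℝ} (hd : 0 < d) : S < ((⌊S / d⌋ : ℝ) + 1) * d :=
  (div_lt_iff₀ hd).mp (Int.lt_floor_add_one _)

lemma le_iff_exists_slack {a d D : ℝ} (hD : 0 < D) (ha : a ≤ D + d) :
    d ≤ a ↔ ∃ t ∈ Set.Icc (0 : ℝ) 1, a + t * D = D + d := by
  constructor
  · intro hda
    refine ⟨(D + d - a) / D, ⟨div_nonneg (by linarith) hD.le, ?_⟩, ?_⟩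
    · rw [div_le_one hD]; linarith
    · field_simp; ring
  · rintro ⟨t, ⟨-, ht1⟩, hat⟩
    nlinarith

lemma sum_mul_snoc {l : ℕ} (y : Fin (l + 1) → ℝ) (c : Fin l → ℝ) (D : ℝ) :
    ∑ j, y j * (Fin.snoc c D : Fin (l + 1) → ℝ) j =
      ∑ i, c i * y i.castSucc + y (Fin.last l) * D := by
  simp [Fin.sum_univ_castSucc, mul_comm]

lemma sum_one_sub_mul {n : ℕ} (y u : Fin n → ℝ) :
    ∑ j, (1 - y j) * u j = ∑ j, u j - ∑ j, y j * u j := by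
  simp only [sub_mul, one_mul, sum_sub_distrib]

lemma complementRows_mem_Icc {n : ℕ} {y : Fin n → ℝ} (hy : ∀ j, y j ∈ Set.Icc (0 : ℝ) 1) :
    ∀ r j, Matrix.of ![y, 1 - y] r j ∈ Set.Icc (0 : ℝ) 1 := by
  intro r j
  obtain ⟨h0, h1⟩ := hy j
  fin_cases r <;> simp <;> constructor <;> linarith

theorem stmt12_general
    {l : ℕ}
    (c : Fin l → ℝ) (hc : ∀ i, 0 ≤ c i) (d : ℝ) (hd : 0 < d)
    (hcd : d ≤ ∑ i, c i)
    (x : Fin l → ℝ) (hx : ∀ i, x i ∈ Set.Icc (0 : ℝ) 1) :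
    (d ≤ ∑ i, c i * x i) ↔
      ∃ Γ : Matrix (Fin 2) (Fin (l + 1)) ℝ,
        (∀ r j, Γ r j ∈ Set.Icc (0 : ℝ) 1) ∧
        (∀ i : Fin l, Γ 0 i.castSucc = x i) ∧
        (∀ j, ∑ r, Γ r j = 1) ∧
        (∑ j, Γ 0 j * (Fin.snoc c ((⌊(∑ i, c i) / d⌋ : ℝ) * d) : Fin (l + 1) → ℝ) j =
          ((⌊(∑ i, c i) / d⌋ : ℝ) + 1) * d) ∧
        (∑ j, Γ 1 j * (Fin.snoc c ((⌊(∑ i, c i) / d⌋ : ℝ) * d) : Fin (l + 1) → ℝ) j = (∑ i, c i) - d) := by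
  set γ : ℝ := (⌊(∑ i, c i) / d⌋ : ℝ)
  have hD : 0 < γ * d := mul_pos (one_pos.trans_le (one_le_floor_div hd hcd)) hd
  have hcx : ∑ i, c i * x i ≤ γ * d + d := by
    have := lt_floor_div_add_one_mul (S := ∑ i, c i) hd
    have : ∑ i, c i * x i ≤ ∑ i, c i :=
      sum_le_sum fun i _ => mul_le_of_le_one_right (hc i) (hx i).2
    linarith
  rw [add_one_mul, le_iff_exists_slack hD hcx]
  constructor
  · rintro ⟨t, ht, hslack⟩
    have hy : ∀ j, (Fin.snoc x t : Fin (l + 1) → ℝ) j ∈ Set.Icc (0 : ℝ) 1 :=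
      Fin.lastCases (by simpa using ht) (by simpa using hx)
    refine ⟨Matrix.of ![Fin.snoc x t, 1 - Fin.snoc x t], complementRows_mem_Icc hy,
      by simp, by simp [Fin.sum_univ_two], ?_, ?_⟩
    · simpa [sum_mul_snoc] using hslack
    · simp only [Matrix.of_apply, Matrix.cons_val_one, Matrix.cons_val_zero, Pi.sub_apply,
        Pi.one_apply, sum_one_sub_mul, Fin.sum_snoc]
      simp only [sum_mul_snoc, Fin.snoc_castSucc, Fin.snoc_last]
      linarith
  · rintro ⟨Γ, hΓ, hrow, -, hfirst, -⟩
    refine ⟨Γ 0 (Fin.last l), hΓ 0 _, ?_⟩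
    simpa [sum_mul_snoc, hrow] using hfirst

/-- LinSAT encoding of a covering constraint: x ∈ [0,1]^l satisfies Σ c_i x_i ≥ d iff the
Sinkhorn marginal constraints with column marginals u_c = (c_1, …, c_l, γd), where
γ = ⌊Σ c_i / d⌋, and row marginals v_c = ((γ+1)d, Σ c_i − d) are satisfiable by some
Γ ∈ [0,1]^{2×(l+1)} whose first row restricted to the first l columns is x. -/
theorem stmt12
    {l : ℕ} (hl : 0 < l)
    (c : Fin l → ℝ) (hc : ∀ i, 0 ≤ c i) (d : ℝ) (hd : 0 < d)
    (hcd : d ≤ ∑ i, c i)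
    (x : Fin l → ℝ) (hx : ∀ i, x i ∈ Set.Icc (0 : ℝ) 1) :
    (d ≤ ∑ i, c i * x i) ↔
      ∃ Γ : Matrix (Fin 2) (Fin (l + 1)) ℝ,
        (∀ r j, Γ r j ∈ Set.Icc (0 : ℝ) 1) ∧
        (∀ i : Fin l, Γ 0 i.castSucc = x i) ∧
        (∀ j, ∑ r, Γ r j = 1) ∧
        (∑ j, Γ 0 j * (Fin.snoc c ((⌊(∑ i, c i) / d⌋ : ℝ) * d) : Fin (l + 1) → ℝ) j =
          ((⌊(∑ i, c i) / d⌋ : ℝ) + 1) * d) ∧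
        (∑ j, Γ 1 j * (Fin.snoc c ((⌊(∑ i, c i) / d⌋ : ℝ) * d) : Fin (l + 1) → ℝ) j = (∑ i, c i) - d) :=
  stmt12_general c hc d hd hcd x hx
end
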